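/- arXiv:0712.0106 — 8 statements merged into one kernel-verified Lean document; each statement's English description precedes it below -/
import Mathlib

section
/- Let λ₁ ≥ λ₂ ≥ λ₃ be real numbers with arctan λ₁ + arctan λ₂ + arctan λ₃ ≥ π/2. Then λ₁ ≥ λ₂ > 0 and λᵢ + λⱼ ≥ 0 for every pair of distinct indices i, j. -/
/-! Since `arctan l₁ < π/2`, the hypothesis forces `arctan l₂ + arctan l₃ > 0`, and as `arctan` is
odd and strictly increasing this is equivalent to `l₂ + l₃ > 0`. The ordering then gives the rest. -/

open Real

theorem Real.arctan_add_arctan_pos_iff {x y : ℝ} : 0 < arctan x + arctan y ↔ 0 < x + y := by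
  rw [← sub_neg_eq_add, sub_pos, ← arctan_neg, arctan_strictMono.lt_iff_lt, ← sub_neg_eq_add,
    sub_pos]

theorem stmt_1 (l₁ l₂ l₃ : ℝ)
    (hord₁ : l₁ ≥ l₂) (hord₂ : l₂ ≥ l₃)
    (hsum : arctan l₁ + arctan l₂ + arctan l₃ ≥ π/2) :
    l₁ ≥ l₂ ∧ l₂ > 0 ∧ l₁ + l₂ ≥ 0 ∧ l₁ + l₃ ≥ 0 ∧ l₂ + l₃ ≥ 0 := by
  have h₂₃ : 0 < l₂ + l₃ :=
    arctan_add_arctan_pos_iff.mp (by linarith [arctan_lt_pi_div_two l₁])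
  refine ⟨hord₁, ?_, ?_, ?_, h₂₃.le⟩ <;> linarith
end

section
/- Let λ₁ ≥ λ₂ ≥ λ₃ be real numbers with arctan λ₁ + arctan λ₂ + arctan λ₃ ≥ π/2 and λ₃ < 0. Then λ₁ + 2λ₃ > 0. -/
/-!
Put `θ = arctan λ₃`. Since `λ₂ ≤ λ₁`, the hypothesis gives `arctan λ₁ ≥ (π/2 - θ)/2`, and by the
half-angle formula `tan ((π/2 - θ)/2) = √(1 + λ₃²) - λ₃`. Hence
`λ₁ + 2λ₃ ≥ √(1 + λ₃²) + λ₃ > 0`.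
-/

open Real

theorem tan_half_pi_div_two_sub_arctan (x : ℝ) :
    tan ((π / 2 - arctan x) / 2) = √(1 + x ^ 2) - x := by
  set φ := (π / 2 - arctan x) / 2
  have hφ : 2 * φ = π / 2 - arctan x := by ring
  have hsin : 0 < sin φ := sin_pos_of_pos_of_lt_pi (by linarith [arctan_lt_pi_div_two x])
    (by linarith [neg_pi_div_two_lt_arctan x, pi_pos])
  have hs : 0 < √(1 + x ^ 2) := by positivity
  have hsin_two : 2 * sin φ * cos φ = 1 / √(1 + x ^ 2) := by
    rw [← sin_two_mul, hφ, sin_pi_div_two_sub, cos_arctan]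
  have hcos_two : 1 - 2 * sin φ ^ 2 = x / √(1 + x ^ 2) := by
    rw [← cos_two_mul_eq_one_sub, hφ, cos_pi_div_two_sub, sin_arctan]
  calc tan φ = 2 * sin φ ^ 2 / (2 * sin φ * cos φ) := by
        rw [tan_eq_sin_div_cos]; field_simp
    _ = √(1 + x ^ 2) - x := by
        rw [hsin_two, show 2 * sin φ ^ 2 = 1 - x / √(1 + x ^ 2) by linarith]
        field_simp

theorem arctan_sqrt_one_add_sq_sub_self (x : ℝ) :
    arctan (√(1 + x ^ 2) - x) = (π / 2 - arctan x) / 2 := by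
  rw [← tan_half_pi_div_two_sub_arctan, arctan_tan] <;>
    linarith [arctan_lt_pi_div_two x, neg_pi_div_two_lt_arctan x]

theorem neg_lt_sqrt_one_add_sq (x : ℝ) : -x < √(1 + x ^ 2) := by
  calc -x ≤ |x| := neg_le_abs x
    _ = √(x ^ 2) := (sqrt_sq_eq_abs x).symm
    _ < √(1 + x ^ 2) := sqrt_lt_sqrt (sq_nonneg x) (by linarith)

theorem stmt_2_general (l₁ l₂ l₃ : ℝ)
    (hord₁ : l₁ ≥ l₂)
    (hsum : arctan l₁ + arctan l₂ + arctan l₃ ≥ π/2) :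
    l₁ + 2 * l₃ > 0 := by
  have h₂₁ : arctan l₂ ≤ arctan l₁ := arctan_strictMono.monotone hord₁
  have h_arctan : arctan (√(1 + l₃ ^ 2) - l₃) ≤ arctan l₁ := by
    rw [arctan_sqrt_one_add_sq_sub_self]; linarith
  have h_l₁ : √(1 + l₃ ^ 2) - l₃ ≤ l₁ := arctan_strictMono.le_iff_le.mp h_arctan
  linarith [neg_lt_sqrt_one_add_sq l₃]

theorem stmt_2 (l₁ l₂ l₃ : ℝ)
    (hord₁ : l₁ ≥ l₂) (hord₂ : l₂ ≥ l₃)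
    (hsum : arctan l₁ + arctan l₂ + arctan l₃ ≥ π/2)
    (hneg : l₃ < 0) :
    l₁ + 2 * l₃ > 0 :=
  stmt_2_general l₁ l₂ l₃ hord₁ hsum
end

section
/- Let λ₁, λ₂, λ₃ be real numbers with π/2 ≤ arctan λ₁ + arctan λ₂ + arctan λ₃ < 3π/2. Then σ₂ := λ₁λ₂ + λ₂λ₃ + λ₃λ₁ ≥ 1. -/
open Real

/-- The real part of `(1 + i a)(1 + i b)(1 + i c)`, computed in polar form. -/
theorem one_sub_sigma₂_eq_mul_cos_arctan_add (a b c : ℝ) :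
    1 - (a * b + b * c + c * a) =
      √(1 + a ^ 2) * √(1 + b ^ 2) * √(1 + c ^ 2) * cos (arctan a + arctan b + arctan c) := by
  simp only [cos_add, sin_add, cos_arctan, sin_arctan]
  field_simp
  ring

theorem stmt_3 (l₁ l₂ l₃ : ℝ)
    (hlow : π/2 ≤ arctan l₁ + arctan l₂ + arctan l₃)
    (hup : arctan l₁ + arctan l₂ + arctan l₃ < 3 * π / 2) :
    l₁ * l₂ + l₂ * l₃ + l₃ * l₁ ≥ 1 := by
  have hcos : cos (arctan l₁ + arctan l₂ + arctan l₃) ≤ 0 :=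
    cos_nonpos_of_pi_div_two_le_of_le hlow (by linarith)
  have hnorm : 0 ≤ √(1 + l₁ ^ 2) * √(1 + l₂ ^ 2) * √(1 + l₃ ^ 2) := by positivity
  linarith [one_sub_sigma₂_eq_mul_cos_arctan_add l₁ l₂ l₃,
    mul_nonpos_of_nonneg_of_nonpos hnorm hcos]
end

section
/- Let λ₁, λ₂, λ₃ be real numbers with λ₁λ₂ + λ₂λ₃ + λ₃λ₁ = 1 and arctan λ₁ + arctan λ₂ + arctan λ₃ = π/2, and set V = ∏ᵢ √(1 + λᵢ²) and σ₁ = λ₁ + λ₂ + λ₃. Then for each i, V/(1 + λᵢ²) = σ₁ − λᵢ. -/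
/-!
Since `σ₂ = 1` gives `1 - λ₂λ₃ = λ₁(λ₂ + λ₃)`, the identity
`(1 + λ₂²)(1 + λ₃²) = (1 - λ₂λ₃)² + (λ₂ + λ₃)²` becomes `(1 + λ₂²)(1 + λ₃²) = (1 + λ₁²)(λ₂ + λ₃)²`,
so `V = (1 + λ₁²) |λ₂ + λ₃|`. On the branch `Σ arctan λᵢ = π/2` we have
`arctan λ₂ + arctan λ₃ = π/2 - arctan λ₁ > 0`, which forces `λ₂ + λ₃ > 0`.
-/

open Real

lemma add_pos_of_arctan_add_arctan_pos {b c : ℝ} (h : 0 < arctan b + arctan c) : 0 < b + c := by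
  by_contra! hbc
  have : arctan b ≤ arctan (-c) := arctan_strictMono.monotone (by linarith)
  rw [arctan_neg] at this
  linarith

lemma one_add_sq_mul_one_add_sq_eq {a b c : ℝ} (h : a * (b + c) = 1 - b * c) :
    (1 + b ^ 2) * (1 + c ^ 2) = (1 + a ^ 2) * (b + c) ^ 2 := by
  linear_combination (-(1 - b * c) - a * (b + c)) * h

lemma sqrt_mul_sqrt_mul_sqrt_div_eq_add {a b c : ℝ} (h : a * (b + c) = 1 - b * c)
    (hpos : 0 < b + c) :
    √(1 + a ^ 2) * √(1 + b ^ 2) * √(1 + c ^ 2) / (1 + a ^ 2) = b + c := by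
  have ha : 0 < 1 + a ^ 2 := by positivity
  have hbc : √(1 + b ^ 2) * √(1 + c ^ 2) = √(1 + a ^ 2) * (b + c) := by
    rw [← sqrt_mul (by positivity), one_add_sq_mul_one_add_sq_eq h, sqrt_mul ha.le,
      sqrt_sq hpos.le]
  rw [mul_assoc, hbc, ← mul_assoc, mul_self_sqrt ha.le, mul_div_cancel_left₀ _ ha.ne']

lemma sqrt_mul_sqrt_mul_sqrt_div_eq_of_arctan {a b c : ℝ} (hσ₂ : a * b + b * c + c * a = 1)
    (hΘ : arctan a + arctan b + arctan c = π / 2) :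
    √(1 + a ^ 2) * √(1 + b ^ 2) * √(1 + c ^ 2) / (1 + a ^ 2) = b + c := by
  refine sqrt_mul_sqrt_mul_sqrt_div_eq_add (by linear_combination hσ₂) ?_
  exact add_pos_of_arctan_add_arctan_pos (by linarith [arctan_lt_pi_div_two a])

theorem stmt_6 (l₁ l₂ l₃ : ℝ)
    (hσ₂ : l₁ * l₂ + l₂ * l₃ + l₃ * l₁ = 1)
    (hΘ : arctan l₁ + arctan l₂ + arctan l₃ = π/2) :
    (Real.sqrt (1 + l₁^2) * Real.sqrt (1 + l₂^2) * Real.sqrt (1 + l₃^2)) / (1 + l₁^2)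
      = (l₁ + l₂ + l₃) - l₁ ∧
    (Real.sqrt (1 + l₁^2) * Real.sqrt (1 + l₂^2) * Real.sqrt (1 + l₃^2)) / (1 + l₂^2)
      = (l₁ + l₂ + l₃) - l₂ ∧
    (Real.sqrt (1 + l₁^2) * Real.sqrt (1 + l₂^2) * Real.sqrt (1 + l₃^2)) / (1 + l₃^2)
      = (l₁ + l₂ + l₃) - l₃ := by
  refine ⟨?_, ?_, ?_⟩
  · rw [sqrt_mul_sqrt_mul_sqrt_div_eq_of_arctan hσ₂ hΘ]
    ring
  · rw [mul_comm √(1 + l₁ ^ 2),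
      sqrt_mul_sqrt_mul_sqrt_div_eq_of_arctan (by linear_combination hσ₂) (by linarith)]
    ring
  · rw [mul_right_comm, mul_comm √(1 + l₁ ^ 2) √(1 + l₃ ^ 2),
      sqrt_mul_sqrt_mul_sqrt_div_eq_of_arctan (by linear_combination hσ₂) (by linarith)]
    ring
end

section
/- Let λ₁, λ₂, λ₃ be real numbers with λ₁λ₂ + λ₂λ₃ + λ₃λ₁ = 1 and arctan λ₁ + arctan λ₂ + arctan λ₃ = π/2, ordered λ₁ ≥ λ₂ ≥ λ₃. Then for each i, 0 < σ₁ − λᵢ ≤ 2.42 σ₁, where σ₁ = λ₁ + λ₂ + λ₃. In particular σ₁ > 0. -/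
/-! Each λᵢ satisfies λᵢ (σ₁ − λᵢ) = 1 − λⱼλₖ, where j, k are the other two indices, so
σ₁ (λⱼ + λₖ) = λⱼ² + λⱼλₖ + λₖ² + 1. The arctangent condition makes every pair sum λⱼ + λₖ
positive, because arctan λⱼ + arctan λₖ = π/2 − arctan λᵢ > 0. Hence σ₁ > 0 and, since
4(λⱼ² + λⱼλₖ + λₖ²) ≥ 3(λⱼ + λₖ)², even σ₁ − λᵢ = λⱼ + λₖ < (4/3) σ₁. -/

open Real

theorem add_pos_of_arctan_add_pos {a b : ℝ} (h : 0 < arctan a + arctan b) : 0 < a + b := by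
  have : arctan (-b) < arctan a := by rw [arctan_neg]; linarith
  linarith [arctan_lt_arctan_iff.mp this]

theorem add_pos_of_arctan_add_add_eq_pi_div_two {a b c : ℝ}
    (h : arctan a + arctan b + arctan c = π / 2) : 0 < a + b :=
  add_pos_of_arctan_add_pos (by linarith [arctan_lt_pi_div_two c])

theorem add_add_mul_add_eq {a b c : ℝ} (h : a * b + b * c + c * a = 1) :
    (a + b + c) * (a + b) = a ^ 2 + a * b + b ^ 2 + 1 := by
  linear_combination h

theorem add_add_pos_of_add_pos {a b c : ℝ} (h : a * b + b * c + c * a = 1) (hab : 0 < a + b) :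
    0 < a + b + c := by
  have : 0 < (a + b + c) * (a + b) := by
    rw [add_add_mul_add_eq h]; nlinarith [sq_nonneg (a + b)]
  exact pos_of_mul_pos_left this hab.le

theorem add_lt_four_thirds_mul_of_add_pos {a b c : ℝ} (h : a * b + b * c + c * a = 1)
    (hab : 0 < a + b) : a + b < 4 / 3 * (a + b + c) := by
  have : (a + b) * (a + b) < 4 / 3 * (a + b + c) * (a + b) := by
    rw [mul_assoc, add_add_mul_add_eq h]; nlinarith [sq_nonneg (a - b)]
  exact lt_of_mul_lt_mul_right this hab.le

theorem stmt_7_general (l₁ l₂ l₃ : ℝ)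
    (hσ₂ : l₁ * l₂ + l₂ * l₃ + l₃ * l₁ = 1)
    (hΘ : arctan l₁ + arctan l₂ + arctan l₃ = π/2) :
    (0 < (l₁ + l₂ + l₃) - l₁ ∧ (l₁ + l₂ + l₃) - l₁ ≤ 2.42 * (l₁ + l₂ + l₃)) ∧
    (0 < (l₁ + l₂ + l₃) - l₂ ∧ (l₁ + l₂ + l₃) - l₂ ≤ 2.42 * (l₁ + l₂ + l₃)) ∧
    (0 < (l₁ + l₂ + l₃) - l₃ ∧ (l₁ + l₂ + l₃) - l₃ ≤ 2.42 * (l₁ + l₂ + l₃)) ∧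
    0 < l₁ + l₂ + l₃ := by
  have hσ₂₃₁ : l₂ * l₃ + l₃ * l₁ + l₁ * l₂ = 1 := by linarith
  have hσ₃₁₂ : l₃ * l₁ + l₁ * l₂ + l₂ * l₃ = 1 := by linarith
  have h₁₂ : 0 < l₁ + l₂ := add_pos_of_arctan_add_add_eq_pi_div_two hΘ
  have h₂₃ : 0 < l₂ + l₃ := add_pos_of_arctan_add_add_eq_pi_div_two (c := l₁) (by linarith)
  have h₃₁ : 0 < l₃ + l₁ := add_pos_of_arctan_add_add_eq_pi_div_two (c := l₂) (by linarith)
  have hσ : 0 < l₁ + l₂ + l₃ := add_add_pos_of_add_pos hσ₂ h₁₂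
  have hle₃ := add_lt_four_thirds_mul_of_add_pos hσ₂ h₁₂
  have hle₁ := add_lt_four_thirds_mul_of_add_pos hσ₂₃₁ h₂₃
  have hle₂ := add_lt_four_thirds_mul_of_add_pos hσ₃₁₂ h₃₁
  refine ⟨⟨?_, ?_⟩, ⟨?_, ?_⟩, ⟨?_, ?_⟩, hσ⟩ <;> linarith

theorem stmt_7 (l₁ l₂ l₃ : ℝ)
    (hord₁ : l₁ ≥ l₂) (hord₂ : l₂ ≥ l₃)
    (hσ₂ : l₁ * l₂ + l₂ * l₃ + l₃ * l₁ = 1)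
    (hΘ : arctan l₁ + arctan l₂ + arctan l₃ = π/2) :
    (0 < (l₁ + l₂ + l₃) - l₁ ∧ (l₁ + l₂ + l₃) - l₁ ≤ 2.42 * (l₁ + l₂ + l₃)) ∧
    (0 < (l₁ + l₂ + l₃) - l₂ ∧ (l₁ + l₂ + l₃) - l₂ ≤ 2.42 * (l₁ + l₂ + l₃)) ∧
    (0 < (l₁ + l₂ + l₃) - l₃ ∧ (l₁ + l₂ + l₃) - l₃ ≤ 2.42 * (l₁ + l₂ + l₃)) ∧
    0 < l₁ + l₂ + l₃ :=
  stmt_7_general l₁ l₂ l₃ hσ₂ hΘ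
end

section
/- Let λ₁ > λ₂ ≥ λ₃ be real numbers with λ₁ ≥ λ₂ > 0, λ₂ > 0, λ₃ < 0, λ₁ + 2λ₃ > 0, and σ₂ := λ₁λ₂ + λ₂λ₃ + λ₃λ₁ ≥ 1. Then for all real numbers a, b, c with a + b + c = 0, (2/3)a² + (2λ₂/(λ₁−λ₂)) b² + (2λ₃/(λ₁−λ₃)) c² ≥ 0, provided λ₁ > λ₂ and λ₁ > λ₃. -/
/-!
Eliminating `a = -(b + c)` and clearing the denominators `l₁ - l₂`, `l₁ - l₃` turns the
expression into a binary quadratic form in `b, c`. Its leading coefficient is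
`(l₁ - l₃)(l₁ + 2l₂) > 0`, and its discriminant is `-3(l₁ - l₂)(l₁ - l₃)σ₂ ≤ 0`,
so it is positive semidefinite.
-/

theorem binary_quadratic_nonneg {A B C : ℝ} (hA : 0 < A) (hdisc : B ^ 2 ≤ A * C) (x y : ℝ) :
    0 ≤ A * x ^ 2 + 2 * B * x * y + C * y ^ 2 := by
  have hcompleted : A * (A * x ^ 2 + 2 * B * x * y + C * y ^ 2)
      = (A * x + B * y) ^ 2 + (A * C - B ^ 2) * y ^ 2 := by ring
  refine nonneg_of_mul_nonneg_right ?_ hA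
  rw [hcompleted]
  exact add_nonneg (sq_nonneg _) (mul_nonneg (sub_nonneg.mpr hdisc) (sq_nonneg y))

theorem weighted_sum_eq_binary_quadratic {l₁ l₂ l₃ a b c : ℝ} (h12 : l₁ ≠ l₂) (h13 : l₁ ≠ l₃)
    (habc : a + b + c = 0) :
    3 / 2 * ((l₁ - l₂) * (l₁ - l₃)) *
        ((2/3) * a^2 + (2 * l₂ / (l₁ - l₂)) * b^2 + (2 * l₃ / (l₁ - l₃)) * c^2)
      = (l₁ - l₃) * (l₁ + 2 * l₂) * b ^ 2 + 2 * ((l₁ - l₂) * (l₁ - l₃)) * b * c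
          + (l₁ - l₂) * (l₁ + 2 * l₃) * c ^ 2 := by
  obtain rfl : a = -(b + c) := by linarith
  have : l₁ - l₂ ≠ 0 := sub_ne_zero.mpr h12
  have : l₁ - l₃ ≠ 0 := sub_ne_zero.mpr h13
  field_simp
  ring

theorem stmt_9_general (l₁ l₂ l₃ : ℝ)
    (h12 : l₁ > l₂) (h23 : l₂ ≥ l₃) (h2 : l₂ > 0)
    (hσ₂ : l₁ * l₂ + l₂ * l₃ + l₃ * l₁ ≥ 1) :
    ∀ a b c : ℝ, a + b + c = 0 →
      (2/3) * a^2 + (2 * l₂ / (l₁ - l₂)) * b^2 + (2 * l₃ / (l₁ - l₃)) * c^2 ≥ 0 := by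
  intro a b c habc
  have hD : 0 < (l₁ - l₂) * (l₁ - l₃) := mul_pos (by linarith) (by linarith)
  have hlead : 0 < (l₁ - l₃) * (l₁ + 2 * l₂) := mul_pos (by linarith) (by linarith)
  have hdisc : ((l₁ - l₂) * (l₁ - l₃)) ^ 2
      ≤ (l₁ - l₃) * (l₁ + 2 * l₂) * ((l₁ - l₂) * (l₁ + 2 * l₃)) := by
    have hσ : (l₁ - l₃) * (l₁ + 2 * l₂) * ((l₁ - l₂) * (l₁ + 2 * l₃))
        - ((l₁ - l₂) * (l₁ - l₃)) ^ 2
        = 3 * ((l₁ - l₂) * (l₁ - l₃)) * (l₁ * l₂ + l₂ * l₃ + l₃ * l₁) := by ring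
    rw [← sub_nonneg, hσ]
    exact mul_nonneg (mul_nonneg zero_le_three hD.le) (by linarith)
  refine le_of_mul_le_mul_left ?_ (mul_pos (by norm_num : (0 : ℝ) < 3 / 2) hD)
  rw [mul_zero, weighted_sum_eq_binary_quadratic h12.ne' (by linarith) habc]
  exact binary_quadratic_nonneg hlead hdisc b c

theorem stmt_9 (l₁ l₂ l₃ : ℝ)
    (h12 : l₁ > l₂) (h23 : l₂ ≥ l₃) (h2 : l₂ > 0) (h3 : l₃ < 0)
    (h13 : l₁ + 2 * l₃ > 0)
    (hσ₂ : l₁ * l₂ + l₂ * l₃ + l₃ * l₁ ≥ 1) :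
    ∀ a b c : ℝ, a + b + c = 0 →
      (2/3) * a^2 + (2 * l₂ / (l₁ - l₂)) * b^2 + (2 * l₃ / (l₁ - l₃)) * c^2 ≥ 0 :=
  stmt_9_general l₁ l₂ l₃ h12 h23 h2 hσ₂
end

section
/- Let λ₁ > λ₂ ≥ λ₃, λ₂ > 0, λ₃ < 0, with σ₂ := λ₁λ₂ + λ₂λ₃ + λ₃λ₁ ≥ 1 and λ₁ + 2λ₂ > 0. Then for all real a, b, c with a + b + c = 0: (λ₁² + 2λ₁λ₂) a² + λ₂² b² + (2λ₂²λ₃/(λ₂−λ₃)) c² ≥ 0. -/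
/-! With `c = -(a + b)`, the form is `A a² + B b² + C (a + b)²` with
`A = λ₁² + 2λ₁λ₂`, `B = λ₂²` and `C = 2λ₂²λ₃/(λ₂ - λ₃) < 0`, a binary quadratic form with
leading coefficient `A + C` and determinant `AB + BC + CA`. Both are nonnegative: `σ₂ ≥ 0`
forces `λ₂ + λ₃ ≥ 0`, which gives `B + C ≥ 0` and `A + C > B + C`, and the determinant is
`λ₂² (λ₁² (λ₂ + λ₃) + 2 λ₂ σ₂) / (λ₂ - λ₃)`. -/

theorem quadratic_nonneg_of_add_eq_zero {A B C a b c : ℝ} (hAC : 0 < A + C)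
    (hdet : 0 ≤ A * B + B * C + C * A) (habc : a + b + c = 0) :
    0 ≤ A * a ^ 2 + B * b ^ 2 + C * c ^ 2 := by
  obtain rfl : c = -(a + b) := by linarith
  have hsq : (A + C) * (A * a ^ 2 + B * b ^ 2 + C * (-(a + b)) ^ 2) =
      ((A + C) * a + C * b) ^ 2 + (A * B + B * C + C * A) * b ^ 2 := by ring
  refine (mul_nonneg_iff_of_pos_left hAC).mp ?_
  rw [hsq]
  positivity

section

variable {l₁ l₂ l₃ : ℝ}

theorem add_nonneg_of_sigma₂_nonneg (h₁ : 0 < l₁) (h₂ : 0 ≤ l₂) (h₃ : l₃ ≤ 0)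
    (hσ : 0 ≤ l₁ * l₂ + l₂ * l₃ + l₃ * l₁) : 0 ≤ l₂ + l₃ := by
  by_contra! h
  nlinarith [mul_nonpos_of_nonneg_of_nonpos h₂ h₃, mul_neg_of_pos_of_neg h₁ h]

theorem sq_add_two_mul_sq_mul_div_sub (h : l₂ ≠ l₃) :
    l₂ ^ 2 + 2 * l₂ ^ 2 * l₃ / (l₂ - l₃) = l₂ ^ 2 * (l₂ + l₃) / (l₂ - l₃) := by
  have : l₂ - l₃ ≠ 0 := sub_ne_zero.mpr h
  field_simp
  ring

theorem eigenvalue_form_det_eq (h : l₂ ≠ l₃) :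
    (l₁ ^ 2 + 2 * l₁ * l₂) * l₂ ^ 2 + l₂ ^ 2 * (2 * l₂ ^ 2 * l₃ / (l₂ - l₃))
      + (2 * l₂ ^ 2 * l₃ / (l₂ - l₃)) * (l₁ ^ 2 + 2 * l₁ * l₂) =
      l₂ ^ 2 * (l₁ ^ 2 * (l₂ + l₃) + 2 * l₂ * (l₁ * l₂ + l₂ * l₃ + l₃ * l₁)) / (l₂ - l₃) := by
  have : l₂ - l₃ ≠ 0 := sub_ne_zero.mpr h
  field_simp
  ring

end

theorem stmt_11_general (l₁ l₂ l₃ : ℝ)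
    (h12 : l₁ > l₂) (h2 : l₂ > 0) (h3 : l₃ < 0)
    (hσ₂ : l₁ * l₂ + l₂ * l₃ + l₃ * l₁ ≥ 1) :
    ∀ a b c : ℝ, a + b + c = 0 →
      (l₁^2 + 2 * l₁ * l₂) * a^2 + l₂^2 * b^2 + (2 * l₂^2 * l₃ / (l₂ - l₃)) * c^2 ≥ 0 := by
  intro a b c habc
  have h32 : l₃ < l₂ := h3.trans h2
  have hd : 0 < l₂ - l₃ := sub_pos.mpr h32
  have h1 : 0 < l₁ := h2.trans h12
  have hs : 0 ≤ l₂ + l₃ := add_nonneg_of_sigma₂_nonneg h1 h2.le h3.le (by linarith)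
  refine quadratic_nonneg_of_add_eq_zero ?_ ?_ habc
  · have hAB : l₂ ^ 2 < l₁ ^ 2 + 2 * l₁ * l₂ := by nlinarith
    have hBC : 0 ≤ l₂ ^ 2 + 2 * l₂ ^ 2 * l₃ / (l₂ - l₃) := by
      rw [sq_add_two_mul_sq_mul_div_sub h32.ne']
      positivity
    linarith
  · rw [eigenvalue_form_det_eq h32.ne']
    have : 0 ≤ l₁ * l₂ + l₂ * l₃ + l₃ * l₁ := by linarith
    positivity

theorem stmt_11 (l₁ l₂ l₃ : ℝ)
    (h12 : l₁ > l₂) (h23 : l₂ ≥ l₃) (h2 : l₂ > 0) (h3 : l₃ < 0)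
    (hσ₂ : l₁ * l₂ + l₂ * l₃ + l₃ * l₁ ≥ 1)
    (h122 : l₁ + 2 * l₂ > 0) :
    ∀ a b c : ℝ, a + b + c = 0 →
      (l₁^2 + 2 * l₁ * l₂) * a^2 + l₂^2 * b^2 + (2 * l₂^2 * l₃ / (l₂ - l₃)) * c^2 ≥ 0 :=
  stmt_11_general l₁ l₂ l₃ h12 h2 h3 hσ₂
end

section
/- Let λ₁ ≥ λ₂ ≥ λ₃ be real numbers with arctan λ₁ + arctan λ₂ + arctan λ₃ = π/2, and suppose ln√(1+λ₂²) ≥ ln√(1+λ₁²) − 2τ and ln√(1+λ₁²) ≥ 1 + ln√(1+tan²(π/6)) for some τ with 0 < τ < 1/2. Then λ₂ > tan(π/6). Moreover if additionally λ₂ = λ₃ then arctan λ₁ + arctan λ₂ + arctan λ₃ > π/2, a contradiction; hence λ₂ > λ₃. -/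
/-!
The hypotheses give `ln √(1 + λ₂²) ≥ ln √(1 + λ₁²) - 2τ > ln √(1 + tan²(π/6))`, so `|λ₂| > tan(π/6)`;
since the arctangents sum to `π/2`, the middle one is positive, hence `λ₂ > tan(π/6)`.
If `λ₂ = λ₃`, all three arctangents would exceed `π/6` and their sum `π/2`.
-/

open Real

lemma log_sqrt_one_add_sq_lt_log_sqrt_one_add_sq_iff {a b : ℝ} :
    log √(1 + a ^ 2) < log √(1 + b ^ 2) ↔ a ^ 2 < b ^ 2 := by
  rw [log_lt_log_iff (by positivity) (by positivity), sqrt_lt_sqrt_iff (by positivity)]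
  exact add_lt_add_iff_left 1

lemma lt_arctan_iff_tan_lt {θ x : ℝ} (hθ₀ : -(π / 2) < θ) (hθ₁ : θ < π / 2) :
    θ < arctan x ↔ tan θ < x := by
  conv_lhs => rw [← arctan_tan hθ₀ hθ₁]
  exact arctan_strictMono.lt_iff_lt

lemma pos_of_arctan_add_arctan_add_arctan_eq_pi_div_two {x y z : ℝ} (hyz : z ≤ y)
    (h : arctan x + arctan y + arctan z = π / 2) : 0 < y := by
  by_contra! hy
  have hy' : arctan y ≤ 0 := arctan_zero ▸ arctan_strictMono.monotone hy
  have hz : arctan z ≤ arctan y := arctan_strictMono.monotone hyz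
  linarith [arctan_lt_pi_div_two x]

theorem stmt_16_general (l₁ l₂ l₃ τ : ℝ)
    (hord₁ : l₁ ≥ l₂) (hord₂ : l₂ ≥ l₃)
    (hΘ : arctan l₁ + arctan l₂ + arctan l₃ = π/2)
    (hτ : τ < 1/2)
    (h2 : Real.log (Real.sqrt (1 + l₂^2)) ≥ Real.log (Real.sqrt (1 + l₁^2)) - 2 * τ)
    (h1 : Real.log (Real.sqrt (1 + l₁^2)) ≥ 1 + Real.log (Real.sqrt (1 + Real.tan (π/6)^2))) :
    l₂ > Real.tan (π/6) ∧ l₂ > l₃ := by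
  have hl₂ : 0 < l₂ := pos_of_arctan_add_arctan_add_arctan_eq_pi_div_two hord₂ hΘ
  have hsq : tan (π / 6) ^ 2 < l₂ ^ 2 :=
    log_sqrt_one_add_sq_lt_log_sqrt_one_add_sq_iff.mp (by linarith)
  have hgt : l₂ > tan (π / 6) := lt_of_pow_lt_pow_left₀ 2 hl₂.le hsq
  refine ⟨hgt, lt_of_le_of_ne hord₂ fun heq => ?_⟩
  have hπ := pi_pos
  have harctan₂ : π / 6 < arctan l₂ := (lt_arctan_iff_tan_lt (by linarith) (by linarith)).mpr hgt
  have harctan₁ : arctan l₂ ≤ arctan l₁ := arctan_strictMono.monotone hord₁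
  rw [heq] at hΘ
  linarith

theorem stmt_16 (l₁ l₂ l₃ τ : ℝ)
    (hord₁ : l₁ ≥ l₂) (hord₂ : l₂ ≥ l₃)
    (hΘ : arctan l₁ + arctan l₂ + arctan l₃ = π/2)
    (hτ₀ : 0 < τ) (hτ : τ < 1/2)
    (h2 : Real.log (Real.sqrt (1 + l₂^2)) ≥ Real.log (Real.sqrt (1 + l₁^2)) - 2 * τ)
    (h1 : Real.log (Real.sqrt (1 + l₁^2)) ≥ 1 + Real.log (Real.sqrt (1 + Real.tan (π/6)^2))) :
    l₂ > Real.tan (π/6) ∧ l₂ > l₃ :=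
  stmt_16_general l₁ l₂ l₃ τ hord₁ hord₂ hΘ hτ h2 h1
end
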